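/- arXiv:2104.08764 — 4 statements merged into one kernel-verified Lean document; each statement's English description precedes it below -/
import Mathlib

section
/- Let A, G be positive definite symmetric d×d real matrices with A ⪯ G, let L be an invertible d×d matrix with Lᵀ L = G⁻¹, and let ν be an admissible direction distribution on ℝ^d. Then ∫ σ_A(BFGS(G, A, Lᵀ ũ)) dν(ũ) = (1 − 1/d) · σ_A(G). -/
/-!
For `u ≠ 0` the two rank-one corrections of the BFGS update change `σ_A` by
`σ_A(BFGS(G, A, u)) = σ_A(G) + 1 - uᵀ G A⁻¹ G u / uᵀ G u`.
Substituting `u = Lᵀ v`, the relation `Lᵀ L = G⁻¹` gives `L G Lᵀ = I`, so the denominator is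
`vᵀ v` and the correction is the Rayleigh quotient of `M = L G A⁻¹ G Lᵀ` at `v`. Admissibility of
`ν` makes the expected Rayleigh quotient of any `M` equal to `tr M / d`, and here
`tr M = tr (A⁻¹ G) = σ_A(G) + d`.
-/

open Matrix MeasureTheory

/-- `σ_A(G) = tr((G - A) A⁻¹)`. -/
noncomputable def sigmaA {d : ℕ} (A G : Matrix (Fin d) (Fin d) ℝ) : ℝ :=
  ((G - A) * A⁻¹).trace

/-- The BFGS quasi-Newton update. -/
noncomputable def BFGS {d : ℕ} (G A : Matrix (Fin d) (Fin d) ℝ) (u : Fin d → ℝ) :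
    Matrix (Fin d) (Fin d) ℝ :=
  if u = 0 then G
  else G - (u ⬝ᵥ (G *ᵥ u))⁻¹ • vecMulVec (G *ᵥ u) (u ᵥ* G)
         + (u ⬝ᵥ (A *ᵥ u))⁻¹ • vecMulVec (A *ᵥ u) (u ᵥ* A)

/-- An admissible direction distribution: a probability measure on `ℝ^d` giving no mass to `0`
and with `∫ u uᵀ/(uᵀu) dν = (1/d) I` (entrywise). -/
def IsAdmissible {d : ℕ} (ν : Measure (Fin d → ℝ)) : Prop :=
  IsProbabilityMeasure ν ∧ ν {0} = 0 ∧
    ∀ i j : Fin d, (∫ u, u i * u j / (u ⬝ᵥ u) ∂ν) = if i = j then (d : ℝ)⁻¹ else 0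

section QuadraticForm

variable {n : Type*} [Fintype n]

lemma dotProduct_mulVec_div_eq_sum (M : Matrix n n ℝ) (v : n → ℝ) (c : ℝ) :
    v ⬝ᵥ (M *ᵥ v) / c = ∑ i, ∑ j, M i j * (v i * v j / c) := by
  simp only [dotProduct, mulVec, Finset.mul_sum, Finset.sum_div]
  exact Finset.sum_congr rfl fun i _ => Finset.sum_congr rfl fun j _ => by ring

lemma abs_mul_le_dotProduct_self (v : n → ℝ) (i j : n) : |v i * v j| ≤ v ⬝ᵥ v := by
  have hle : ∀ k, v k * v k ≤ v ⬝ᵥ v := fun k =>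
    Finset.single_le_sum (f := fun k => v k * v k) (fun k _ => mul_self_nonneg (v k))
      (Finset.mem_univ k)
  rw [abs_le]
  constructor <;> nlinarith [hle i, hle j, sq_nonneg (v i + v j), sq_nonneg (v i - v j)]

variable (ν : Measure (n → ℝ)) [IsFiniteMeasure ν]

lemma integrable_mul_div_dotProduct_self (i j : n) :
    Integrable (fun v => v i * v j / (v ⬝ᵥ v)) ν := by
  have hmeas : Measurable fun v : n → ℝ => v i * v j / (v ⬝ᵥ v) := by fun_prop
  refine .of_bound hmeas.aestronglyMeasurable 1 (Filter.Eventually.of_forall fun v => ?_)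
  have hnonneg : 0 ≤ v ⬝ᵥ v := Finset.sum_nonneg fun k _ => mul_self_nonneg (v k)
  rw [Real.norm_eq_abs, abs_div, abs_of_nonneg hnonneg]
  exact div_le_one_of_le₀ (abs_mul_le_dotProduct_self v i j) hnonneg

lemma integrable_dotProduct_mulVec_div_dotProduct_self (M : Matrix n n ℝ) :
    Integrable (fun v => v ⬝ᵥ (M *ᵥ v) / (v ⬝ᵥ v)) ν := by
  simp_rw [dotProduct_mulVec_div_eq_sum]
  exact integrable_finsetSum _ fun i _ => integrable_finsetSum _ fun j _ =>
    (integrable_mul_div_dotProduct_self ν i j).const_mul (M i j)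

end QuadraticForm

namespace IsAdmissible

variable {d : ℕ} {ν : Measure (Fin d → ℝ)}

lemma dim_ne_zero (hν : IsAdmissible ν) : d ≠ 0 := by
  obtain ⟨hprob, hzero, -⟩ := hν
  rintro rfl
  rw [show ({0} : Set (Fin 0 → ℝ)) = Set.univ from Set.eq_univ_of_forall fun x =>
    Subsingleton.elim x 0, measure_univ] at hzero
  exact one_ne_zero hzero

lemma ae_ne_zero (hν : IsAdmissible ν) : ∀ᵐ v ∂ν, v ≠ 0 := by
  simpa [ae_iff] using hν.2.1

lemma integral_dotProduct_mulVec_div (hν : IsAdmissible ν) (M : Matrix (Fin d) (Fin d) ℝ) :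
    ∫ v, v ⬝ᵥ (M *ᵥ v) / (v ⬝ᵥ v) ∂ν = M.trace / d := by
  obtain ⟨hprob, -, hmom⟩ := hν
  have hint (i j : Fin d) := (integrable_mul_div_dotProduct_self ν i j).const_mul (M i j)
  simp_rw [dotProduct_mulVec_div_eq_sum]
  rw [integral_finsetSum _ fun i _ => integrable_finsetSum _ fun j _ => hint i j]
  have hrow (i : Fin d) : ∫ v, ∑ j, M i j * (v i * v j / (v ⬝ᵥ v)) ∂ν = M i i / d := by
    rw [integral_finsetSum _ fun j _ => hint i j]
    simp_rw [integral_const_mul, hmom, mul_ite, mul_zero, Finset.sum_ite_eq, Finset.mem_univ,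
      if_true, div_eq_mul_inv]
  simp only [hrow, trace, diag, Finset.sum_div]

end IsAdmissible

section BFGS

variable {d : ℕ} {A G L : Matrix (Fin d) (Fin d) ℝ}

lemma sigmaA_eq_trace_sub (hA : IsUnit A.det) : sigmaA A G = (G * A⁻¹).trace - d := by
  rw [sigmaA, Matrix.sub_mul, trace_sub, mul_nonsing_inv _ hA, trace_one, Fintype.card_fin]

lemma sigmaA_BFGS (hA : IsUnit A.det) {u : Fin d → ℝ} (hu : u ⬝ᵥ (A *ᵥ u) ≠ 0) :
    sigmaA A (BFGS G A u) =
      sigmaA A G + 1 - (u ⬝ᵥ ((G * A⁻¹ * G) *ᵥ u)) / (u ⬝ᵥ (G *ᵥ u)) := by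
  have hu₀ : u ≠ 0 := by rintro rfl; simp at hu
  have htrG : (vecMulVec (G *ᵥ u) (u ᵥ* G) * A⁻¹).trace = u ⬝ᵥ ((G * A⁻¹ * G) *ᵥ u) := by
    rw [vecMulVec_mul, trace_vecMulVec, vecMul_vecMul, dotProduct_comm, ← dotProduct_mulVec,
      mulVec_mulVec]
  have htrA : (vecMulVec (A *ᵥ u) (u ᵥ* A) * A⁻¹).trace = u ⬝ᵥ (A *ᵥ u) := by
    rw [vecMulVec_mul, trace_vecMulVec, vecMul_vecMul, mul_nonsing_inv _ hA, vecMul_one,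
      dotProduct_comm]
  simp only [sigmaA_eq_trace_sub hA, BFGS, if_neg hu₀, Matrix.add_mul, Matrix.sub_mul, trace_add,
    trace_sub, Matrix.smul_mul, trace_smul, smul_eq_mul, htrG, htrA, inv_mul_cancel₀ hu]
  ring

lemma dotProduct_mulVec_transpose_mulVec (N : Matrix (Fin d) (Fin d) ℝ) (v : Fin d → ℝ) :
    (Lᵀ *ᵥ v) ⬝ᵥ (N *ᵥ (Lᵀ *ᵥ v)) = v ⬝ᵥ ((L * N * Lᵀ) *ᵥ v) := by
  rw [mulVec_mulVec, mulVec_transpose, ← dotProduct_mulVec, mulVec_mulVec, ← Matrix.mul_assoc]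

lemma sigmaA_BFGS_transpose_mulVec (hA : A.PosDef) (hLGL : L * G * Lᵀ = 1)
    {v : Fin d → ℝ} (hv : v ≠ 0) :
    sigmaA A (BFGS G A (Lᵀ *ᵥ v)) =
      sigmaA A G + 1 - v ⬝ᵥ ((L * (G * A⁻¹ * G) * Lᵀ) *ᵥ v) / (v ⬝ᵥ v) := by
  have hLv : Lᵀ *ᵥ v ≠ 0 := fun h => hv <| by
    rw [← one_mulVec v, ← hLGL, ← mulVec_mulVec, h, mulVec_zero]
  have hAv : (Lᵀ *ᵥ v) ⬝ᵥ (A *ᵥ (Lᵀ *ᵥ v)) ≠ 0 := by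
    simpa using (hA.dotProduct_mulVec_pos hLv).ne'
  rw [sigmaA_BFGS ((isUnit_iff_isUnit_det A).1 hA.isUnit) hAv,
    dotProduct_mulVec_transpose_mulVec, dotProduct_mulVec_transpose_mulVec, hLGL, one_mulVec]

lemma trace_conj_eq_sigmaA_add (hA : IsUnit A.det) (hG : IsUnit G.det) (hLG : Lᵀ * L = G⁻¹) :
    (L * (G * A⁻¹ * G) * Lᵀ).trace = sigmaA A G + d := by
  have hcancel : G⁻¹ * (G * A⁻¹ * G) = A⁻¹ * G := by
    rw [Matrix.mul_assoc G, ← Matrix.mul_assoc G⁻¹, nonsing_inv_mul _ hG, Matrix.one_mul]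
  rw [trace_mul_cycle, hLG, hcancel, trace_mul_comm, sigmaA_eq_trace_sub hA]
  ring

end BFGS

theorem random_BFGS_expected_progress_general
    {d : ℕ} {A G : Matrix (Fin d) (Fin d) ℝ}
    (hA : A.PosDef) (hG : G.PosDef)
    {L : Matrix (Fin d) (Fin d) ℝ} (hLG : Lᵀ * L = G⁻¹)
    (ν : Measure (Fin d → ℝ)) (hν : IsAdmissible ν) :
    (∫ v, sigmaA A (BFGS G A (Lᵀ *ᵥ v)) ∂ν) = (1 - 1 / (d : ℝ)) * sigmaA A G := by
  have hGdet : IsUnit G.det := (isUnit_iff_isUnit_det G).1 hG.isUnit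
  have hLGL : L * G * Lᵀ = 1 := by
    rw [Matrix.mul_assoc, mul_eq_one_comm, Matrix.mul_assoc, hLG, mul_nonsing_inv _ hGdet]
  have hd : (d : ℝ) ≠ 0 := Nat.cast_ne_zero.2 hν.dim_ne_zero
  have := hν.1
  calc (∫ v, sigmaA A (BFGS G A (Lᵀ *ᵥ v)) ∂ν)
      = ∫ v, sigmaA A G + 1 - v ⬝ᵥ ((L * (G * A⁻¹ * G) * Lᵀ) *ᵥ v) / (v ⬝ᵥ v) ∂ν :=
        integral_congr_ae <| hν.ae_ne_zero.mono fun v hv =>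
          sigmaA_BFGS_transpose_mulVec hA hLGL hv
    _ = sigmaA A G + 1 - (sigmaA A G + d) / d := by
        rw [integral_sub (integrable_const _)
            (integrable_dotProduct_mulVec_div_dotProduct_self ν _), integral_const,
          probReal_univ, one_smul, hν.integral_dotProduct_mulVec_div,
          trace_conj_eq_sigmaA_add ((isUnit_iff_isUnit_det A).1 hA.isUnit) hGdet hLG]
    _ = (1 - 1 / (d : ℝ)) * sigmaA A G := by
        field_simp
        ring

/-- One random scaled BFGS step:
`∫ σ_A(BFGS(G, A, Lᵀ ũ)) dν(ũ) = (1 - 1/d) σ_A(G)`. -/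
theorem random_BFGS_expected_progress
    {d : ℕ} {A G : Matrix (Fin d) (Fin d) ℝ}
    (hA : A.PosDef) (hG : G.PosDef) (hAsymm : A.IsSymm) (hGsymm : G.IsSymm)
    (hAG : (G - A).PosSemidef)
    {L : Matrix (Fin d) (Fin d) ℝ} (hL : IsUnit L) (hLG : Lᵀ * L = G⁻¹)
    (ν : Measure (Fin d → ℝ)) (hν : IsAdmissible ν) :
    (∫ v, sigmaA A (BFGS G A (Lᵀ *ᵥ v)) ∂ν) = (1 - 1 / (d : ℝ)) * sigmaA A G :=
  random_BFGS_expected_progress_general hA hG hLG ν hν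
end

section
/- Let 0 < m ≤ L be reals, A a real symmetric d×d matrix with m·I_d ⪯ A ⪯ L·I_d, b ∈ ℝ^d, x_0 ∈ ℝ^d, and G_0 ⪰ A symmetric. Define recursively: x_{k+1} := x_k − G_k⁻¹(A x_k − b); u_k = e_{i_k} a standard basis vector with (G_k − A)_{i_k,i_k} ≥ (G_k − A)_{j,j} for every j; and G_{k+1} := SR1(G_k, A, u_k). Then for every 0 ≤ k ≤ d: λ_f(x_{k+1}) ≤ (1 − k/d) · (τ_A(G_0)/m) · λ_f(x_k). -/
open Matrix

/-- `τ_A(G) = tr(G - A)`. -/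
noncomputable def tauA {d : ℕ} (A G : Matrix (Fin d) (Fin d) ℝ) : ℝ :=
  (G - A).trace

/-- The SR1 quasi-Newton update. -/
noncomputable def SR1 {d : ℕ} (G A : Matrix (Fin d) (Fin d) ℝ) (u : Fin d → ℝ) :
    Matrix (Fin d) (Fin d) ℝ :=
  if G *ᵥ u = A *ᵥ u then G
  else G - (u ⬝ᵥ ((G - A) *ᵥ u))⁻¹ • vecMulVec ((G - A) *ᵥ u) (u ᵥ* (G - A))

/-- `λ_f(x) = sqrt((Ax - b)ᵀ A⁻¹ (Ax - b))` for the quadratic `f(x) = ½ xᵀAx - bᵀx`. -/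
noncomputable def lambdaF {d : ℕ} (A : Matrix (Fin d) (Fin d) ℝ) (b x : Fin d → ℝ) : ℝ :=
  Real.sqrt ((A *ᵥ x - b) ⬝ᵥ (A⁻¹ *ᵥ (A *ᵥ x - b)))

/-!
Track the residuals `M_k = G_k - A ⪰ 0`. Along `u = e_i` the SR1 update acts on the residual as
`M ↦ M - M e_i e_iᵀ M / M_ii`. This keeps `M ⪰ 0`, lowers the trace by at least `M_ii`, and
annihilates the `i`-th diagonal entry together with every diagonal entry that was already zero.
So at most `d - k` diagonal entries of `M_k` are nonzero, and since the greedy index maximises the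
diagonal, `tr M_k ≤ (d - k) (M_k)_ii`; hence `tr M_{k+1} ≤ (1 - 1/(d - k)) tr M_k`, which telescopes
to `tr M_k ≤ (1 - k/d) τ_A(G_0)`. Finally `M_k ⪯ tr(M_k) I ⪯ η A` with `η = tr(M_k)/m`, and a
quasi-Newton step with `A ⪯ G ⪯ (1 + η) A` contracts `λ_f` by the factor `η`.
-/

open Finset

namespace Matrix

variable {n : Type*}

lemma PosSemidef.isSymm {M : Matrix n n ℝ} (hM : M.PosSemidef) : M.IsSymm :=
  isHermitian_iff_isSymm.mp hM.isHermitian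

lemma posDef_of_posSemidef_sub_smul_one [DecidableEq n] {A : Matrix n n ℝ} {m : ℝ} (hm : 0 < m)
    (h : (A - m • 1).PosSemidef) : A.PosDef := by
  simpa using PosDef.posSemidef_add h (PosDef.one.smul hm)

variable [Fintype n]

lemma IsSymm.dotProduct_mulVec_comm {M : Matrix n n ℝ} (hM : M.IsSymm) (x y : n → ℝ) :
    x ⬝ᵥ M *ᵥ y = y ⬝ᵥ M *ᵥ x := by
  rw [dotProduct_mulVec, ← mulVec_transpose, hM.eq, dotProduct_comm]

namespace PosSemidef

variable {M : Matrix n n ℝ}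

lemma dotProduct_mulVec_self_nonneg (hM : M.PosSemidef) (x : n → ℝ) : 0 ≤ x ⬝ᵥ M *ᵥ x := by
  simpa using hM.dotProduct_mulVec_nonneg x

lemma sq_dotProduct_mulVec_le (hM : M.PosSemidef) (x y : n → ℝ) :
    (x ⬝ᵥ M *ᵥ y) ^ 2 ≤ (x ⬝ᵥ M *ᵥ x) * (y ⬝ᵥ M *ᵥ y) := by
  classical
  simpa only [toBilin'_apply'] using (toBilin' M).apply_sq_le_of_symm
    (fun u => by simpa only [toBilin'_apply'] using hM.dotProduct_mulVec_self_nonneg u)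
    ⟨fun u v => by
      simpa only [toBilin'_apply', RingHom.id_apply] using hM.isSymm.dotProduct_mulVec_comm u v⟩
    x y

lemma dotProduct_mulVec_le_trace_mul (hM : M.PosSemidef) (x : n → ℝ) :
    x ⬝ᵥ M *ᵥ x ≤ M.trace * (x ⬝ᵥ x) := by
  have hxx : 0 ≤ x ⬝ᵥ x := sum_nonneg fun j _ => mul_self_nonneg (x j)
  rcases (hM.dotProduct_mulVec_self_nonneg x).eq_or_lt with hq | hq
  · rw [← hq]
    exact mul_nonneg hM.trace_nonneg hxx
  refine le_of_mul_le_mul_right ?_ hq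
  classical
  -- `(xᵀMx)² ≤ ‖x‖² ‖Mx‖²` and `(Mx)_j² ≤ M_jj · xᵀMx`, both by Cauchy–Schwarz
  calc (x ⬝ᵥ M *ᵥ x) * (x ⬝ᵥ M *ᵥ x) = (∑ j, x j * (M *ᵥ x) j) ^ 2 := by rw [sq]; rfl
    _ ≤ (∑ j, x j ^ 2) * ∑ j, (M *ᵥ x) j ^ 2 := sum_mul_sq_le_sq_mul_sq _ _ _
    _ ≤ (x ⬝ᵥ x) * ∑ j, M j j * (x ⬝ᵥ M *ᵥ x) := by
      gcongr with j _
      · simp [dotProduct, sq]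
      · simpa using hM.sq_dotProduct_mulVec_le (Pi.single j 1) x
    _ = M.trace * (x ⬝ᵥ x) * (x ⬝ᵥ M *ᵥ x) := by
      rw [← sum_mul, trace]
      simp only [diag_apply]
      ring

lemma dotProduct_mulVec_le_trace_div_mul (hM : M.PosSemidef) {A : Matrix n n ℝ} {m : ℝ}
    (hm : 0 < m) (hA : ∀ y, m * (y ⬝ᵥ y) ≤ y ⬝ᵥ A *ᵥ y) (y : n → ℝ) :
    y ⬝ᵥ M *ᵥ y ≤ M.trace / m * (y ⬝ᵥ A *ᵥ y) :=
  calc y ⬝ᵥ M *ᵥ y ≤ M.trace * (y ⬝ᵥ y) := hM.dotProduct_mulVec_le_trace_mul y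
    _ = M.trace / m * (m * (y ⬝ᵥ y)) := by field_simp
    _ ≤ M.trace / m * (y ⬝ᵥ A *ᵥ y) := by
      gcongr
      · exact div_nonneg hM.trace_nonneg hm.le
      · exact hA y

end PosSemidef

variable [DecidableEq n] {A G M : Matrix n n ℝ} {m : ℝ}

lemma mul_dotProduct_self_le_of_posSemidef_sub_smul_one (h : (A - m • 1).PosSemidef)
    (y : n → ℝ) : m * (y ⬝ᵥ y) ≤ y ⬝ᵥ A *ᵥ y := by
  have := h.dotProduct_mulVec_self_nonneg y
  rwa [sub_mulVec, smul_mulVec, one_mulVec, dotProduct_sub, dotProduct_smul, smul_eq_mul,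
    sub_nonneg] at this

namespace PosDef

lemma mulVec_inv_mulVec (hA : A.PosDef) (v : n → ℝ) : A *ᵥ (A⁻¹ *ᵥ v) = v := by
  rw [mulVec_mulVec, mul_nonsing_inv _ ((isUnit_iff_isUnit_det A).mp hA.isUnit), one_mulVec]

lemma dotProduct_inv_mulVec_le_of_posSemidef_sub (hA : A.PosDef) (hGA : (G - A).PosSemidef)
    (r : n → ℝ) : r ⬝ᵥ G⁻¹ *ᵥ r ≤ r ⬝ᵥ A⁻¹ *ᵥ r := by
  -- for `y = G⁻¹ r`: `rᵀA⁻¹r ≥ 2 rᵀy - yᵀAy` (expand `0 ≤ ‖A⁻¹r - y‖²_A`) and `yᵀAy ≤ yᵀGy = rᵀy`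
  have hG : G.PosDef := by simpa using hA.add_posSemidef hGA
  set y := G⁻¹ *ᵥ r
  have hyAy : y ⬝ᵥ A *ᵥ y ≤ r ⬝ᵥ y := by
    have := hGA.dotProduct_mulVec_self_nonneg y
    rwa [sub_mulVec, dotProduct_sub, hG.mulVec_inv_mulVec, dotProduct_comm, sub_nonneg] at this
  have hexpand : (A⁻¹ *ᵥ r - y) ⬝ᵥ A *ᵥ (A⁻¹ *ᵥ r - y) =
      r ⬝ᵥ A⁻¹ *ᵥ r - 2 * (r ⬝ᵥ y) + y ⬝ᵥ A *ᵥ y := by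
    rw [mulVec_sub, hA.mulVec_inv_mulVec, sub_dotProduct, dotProduct_sub, dotProduct_sub,
      hA.posSemidef.isSymm.dotProduct_mulVec_comm, hA.mulVec_inv_mulVec, dotProduct_comm _ r,
      dotProduct_comm y r]
    ring
  have := hA.posSemidef.dotProduct_mulVec_self_nonneg (A⁻¹ *ᵥ r - y)
  linarith

end PosDef

lemma PosSemidef.dotProduct_inv_mulVec_le (hA : A.PosDef) (hM : M.PosSemidef) {η : ℝ}
    (hη : 0 ≤ η) (hle : ∀ y, y ⬝ᵥ M *ᵥ y ≤ η * (y ⬝ᵥ A *ᵥ y)) (w : n → ℝ) :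
    (M *ᵥ w) ⬝ᵥ A⁻¹ *ᵥ (M *ᵥ w) ≤ η * (w ⬝ᵥ M *ᵥ w) := by
  -- with `v = A⁻¹ M w` the left side is `wᵀ M v`, and Cauchy–Schwarz for `M` gives
  -- `(wᵀ M v)² ≤ (wᵀ M w)(vᵀ M v) ≤ η (wᵀ M w)(vᵀ A v) = η (wᵀ M w)(wᵀ M v)`
  set v := A⁻¹ *ᵥ (M *ᵥ w)
  have hv : (M *ᵥ w) ⬝ᵥ v = w ⬝ᵥ M *ᵥ v := by
    rw [dotProduct_comm, hM.isSymm.dotProduct_mulVec_comm]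
  have hvMv : v ⬝ᵥ M *ᵥ v ≤ η * ((M *ᵥ w) ⬝ᵥ v) := by
    have := hle v
    rwa [hA.mulVec_inv_mulVec, dotProduct_comm v (M *ᵥ w)] at this
  have hCS := hM.sq_dotProduct_mulVec_le w v
  rw [← hv] at hCS
  have hwMw := hM.dotProduct_mulVec_self_nonneg w
  rcases (hA.inv.posSemidef.dotProduct_mulVec_self_nonneg (M *ᵥ w)).eq_or_lt with h | h
  · rw [← h]
    positivity
  · nlinarith

end Matrix

variable {n : Type*}

/-- The SR1 update along `e_i`, acting on the residual `M = G - A` (see `SR1_single_sub`).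
When `M i i = 0`, the convention `0⁻¹ = 0` makes it `M` itself. -/
noncomputable def sr1Residual (M : Matrix n n ℝ) (i : n) : Matrix n n ℝ :=
  M - (M i i)⁻¹ • vecMulVec (M.col i) (M.row i)

lemma SR1_single_sub {d : ℕ} (G A : Matrix (Fin d) (Fin d) ℝ) (i : Fin d) :
    SR1 G A (Pi.single i 1) - A = sr1Residual (G - A) i := by
  rw [SR1, sr1Residual]
  split_ifs with h
  · have hcol : (G - A).col i = 0 := by rw [← mulVec_single_one, sub_mulVec, h, sub_self]
    simp [hcol]
  · simp [sub_right_comm]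

lemma sr1Residual_apply_self_self {M : Matrix n n ℝ} (i : n) : sr1Residual M i i i = 0 := by
  rcases eq_or_ne (M i i) 0 with h | h
  · simp [sr1Residual, h]
  · simp [sr1Residual, vecMulVec_apply, inv_mul_cancel_left₀ h]

lemma sr1Residual_apply_self_le {M : Matrix n n ℝ} (hM : M.PosSemidef) (i j : n) :
    sr1Residual M i j j ≤ M j j := by
  simp only [sr1Residual, Matrix.sub_apply, Matrix.smul_apply, vecMulVec_apply, col_apply,
    row_apply, smul_eq_mul, sub_le_self_iff, hM.isSymm.apply i j]
  exact mul_nonneg (inv_nonneg.mpr hM.diag_nonneg) (mul_self_nonneg _)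

noncomputable def diagSupport [Fintype n] (M : Matrix n n ℝ) : Finset n := {j | M j j ≠ 0}

variable [Fintype n] {M : Matrix n n ℝ}

lemma dotProduct_sr1Residual_mulVec_self [DecidableEq n] (hM : M.IsSymm) (i : n) (x : n → ℝ) :
    x ⬝ᵥ sr1Residual M i *ᵥ x = x ⬝ᵥ M *ᵥ x - (M i i)⁻¹ * (x ⬝ᵥ M *ᵥ Pi.single i 1) ^ 2 := by
  have hrow : M.row i = M.col i := by rw [row, col, hM.eq]
  rw [sr1Residual, hrow, sub_mulVec, dotProduct_sub, smul_mulVec, vecMulVec_mulVec,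
    mulVec_single_one]
  simp [dotProduct_comm (M.col i) x, sq]

lemma posSemidef_sr1Residual (hM : M.PosSemidef) (i : n) : (sr1Residual M i).PosSemidef := by
  classical
  refine .of_dotProduct_mulVec_nonneg ?_ fun x => ?_
  · rw [isHermitian_iff_isSymm, sr1Residual, row, col, hM.isSymm.eq]
    exact hM.isSymm.sub (IsSymm.smul (transpose_vecMulVec _ _) _)
  · rw [star_trivial, dotProduct_sr1Residual_mulVec_self hM.isSymm, sub_nonneg]
    refine inv_mul_le_of_le_mul₀ hM.diag_nonneg (hM.dotProduct_mulVec_self_nonneg x) ?_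
    simpa [mul_comm] using hM.sq_dotProduct_mulVec_le x (Pi.single i 1)

lemma trace_sr1Residual_le (hM : M.PosSemidef) (i : n) :
    (sr1Residual M i).trace ≤ M.trace - M i i := by
  have hcol : M.col i = M.row i := by rw [col, row, hM.isSymm.eq]
  have hrow : M i i * M i i ≤ M.row i ⬝ᵥ M.row i :=
    single_le_sum (f := fun j => M i j * M i j) (fun j _ => mul_self_nonneg _) (mem_univ i)
  rw [sr1Residual, trace_sub, trace_smul, trace_vecMulVec, hcol, smul_eq_mul, sub_le_sub_iff_left]
  rcases hM.diag_nonneg.eq_or_lt with h | h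
  · rw [← h, _root_.inv_zero, zero_mul]
  · rwa [le_inv_mul_iff₀ h]

lemma trace_le_card_diagSupport_mul {i : n} (h : ∀ j, M j j ≤ M i i) :
    M.trace ≤ #(diagSupport M) * M i i := by
  calc M.trace = ∑ j ∈ diagSupport M, M j j := (sum_filter_ne_zero _).symm
    _ ≤ #(diagSupport M) * M i i := by
      rw [← nsmul_eq_mul]
      exact sum_le_card_nsmul _ _ _ fun j _ => h j

lemma card_diagSupport_sr1Residual_le (hM : M.PosSemidef) {i : n} (h : ∀ j, M j j ≤ M i i) :
    #(diagSupport (sr1Residual M i)) ≤ #(diagSupport M) - 1 := by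
  classical
  have hsubset : diagSupport (sr1Residual M i) ⊆ (diagSupport M).erase i := by
    intro j hj
    simp only [diagSupport, mem_filter, mem_univ, true_and, mem_erase] at hj ⊢
    refine ⟨fun hji => hj (hji ▸ sr1Residual_apply_self_self j), fun hMj => hj ?_⟩
    exact le_antisymm (hMj ▸ sr1Residual_apply_self_le hM i j)
      (posSemidef_sr1Residual hM i).diag_nonneg
  refine (card_le_card hsubset).trans ?_
  by_cases hi : i ∈ diagSupport M
  · rw [card_erase_of_mem hi]
  · have hempty : diagSupport M = ∅ := by
      simp only [diagSupport, mem_filter, mem_univ, true_and, not_not] at hi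
      simp only [diagSupport, filter_eq_empty_iff, mem_univ, true_implies, not_not]
      exact fun j => le_antisymm (hi ▸ h j) hM.diag_nonneg
    simp [hempty]

lemma le_one_sub_div_mul_of_sub_mul_succ_le {d : ℕ} {t : ℕ → ℝ}
    (h : ∀ k < d, ((d : ℝ) - k) * t (k + 1) ≤ ((d : ℝ) - k - 1) * t k) :
    ∀ k ≤ d, t k ≤ (1 - k / d) * t 0 := by
  have key : ∀ k ≤ d, d * t k ≤ (d - k) * t 0 := by
    intro k hk
    induction k with
    | zero => simp
    | succ k ih =>
      have hk' : (k : ℝ) + 1 ≤ d := by exact_mod_cast hk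
      have hpos : (0 : ℝ) < d - k := by linarith
      refine le_of_mul_le_mul_left ?_ hpos
      calc ((d : ℝ) - k) * (d * t (k + 1)) = d * (((d : ℝ) - k) * t (k + 1)) := by ring
        _ ≤ d * (((d : ℝ) - k - 1) * t k) := mul_le_mul_of_nonneg_left (h k hk) d.cast_nonneg
        _ = ((d : ℝ) - k - 1) * (d * t k) := by ring
        _ ≤ ((d : ℝ) - k - 1) * ((d - k) * t 0) :=
            mul_le_mul_of_nonneg_left (ih (by omega)) (by linarith)
        _ = ((d : ℝ) - k) * ((d - ↑(k + 1)) * t 0) := by push_cast; ring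
  intro k hk
  rcases Nat.eq_zero_or_pos d with rfl | hd
  · simp [Nat.le_zero.mp hk]
  · have hd' : (0 : ℝ) < d := by exact_mod_cast hd
    rw [one_sub_div hd'.ne', div_mul_eq_mul_div, le_div_iff₀ hd', mul_comm]
    exact key k hk

section GreedySequence

variable {M : ℕ → Matrix n n ℝ} {i : ℕ → n}

lemma posSemidef_of_sr1Residual_rec (hM0 : (M 0).PosSemidef)
    (hrec : ∀ k, M (k + 1) = sr1Residual (M k) (i k)) (k : ℕ) : (M k).PosSemidef := by
  induction k with
  | zero => exact hM0
  | succ k ih => exact hrec k ▸ posSemidef_sr1Residual ih (i k)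

lemma card_diagSupport_le_card_sub (hM0 : (M 0).PosSemidef)
    (hgreedy : ∀ k j, M k j j ≤ M k (i k) (i k))
    (hrec : ∀ k, M (k + 1) = sr1Residual (M k) (i k)) (k : ℕ) :
    #(diagSupport (M k)) ≤ Fintype.card n - k := by
  induction k with
  | zero => exact card_le_univ _
  | succ k ih =>
    rw [hrec k]
    refine (card_diagSupport_sr1Residual_le (posSemidef_of_sr1Residual_rec hM0 hrec k)
      (hgreedy k)).trans ?_
    omega

lemma trace_le_one_sub_div_mul (hM0 : (M 0).PosSemidef)
    (hgreedy : ∀ k j, M k j j ≤ M k (i k) (i k))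
    (hrec : ∀ k, M (k + 1) = sr1Residual (M k) (i k)) :
    ∀ k ≤ Fintype.card n, (M k).trace ≤ (1 - k / Fintype.card n) * (M 0).trace := by
  refine le_one_sub_div_mul_of_sub_mul_succ_le fun k hk => ?_
  have hpsd := posSemidef_of_sr1Residual_rec hM0 hrec k
  have hstep : (M (k + 1)).trace ≤ (M k).trace - M k (i k) (i k) :=
    hrec k ▸ trace_sr1Residual_le hpsd (i k)
  have hcard : (#(diagSupport (M k)) : ℝ) ≤ Fintype.card n - k := by
    rw [← Nat.cast_sub hk.le]
    exact_mod_cast card_diagSupport_le_card_sub hM0 hgreedy hrec k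
  have hmax : (M k).trace ≤ (Fintype.card n - k) * M k (i k) (i k) :=
    (trace_le_card_diagSupport_mul (hgreedy k)).trans (by gcongr; exact hpsd.diag_nonneg)
  have hpos : (0 : ℝ) ≤ Fintype.card n - k := by
    have : (k : ℝ) < Fintype.card n := by exact_mod_cast hk
    linarith
  nlinarith [mul_le_mul_of_nonneg_left hstep hpos]

end GreedySequence

lemma lambdaF_sub_inv_mulVec_le {d : ℕ} {A G : Matrix (Fin d) (Fin d) ℝ} (hA : A.PosDef)
    (hGA : (G - A).PosSemidef) {η : ℝ} (hη : 0 ≤ η)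
    (hle : ∀ y, y ⬝ᵥ (G - A) *ᵥ y ≤ η * (y ⬝ᵥ A *ᵥ y)) (b x : Fin d → ℝ) :
    lambdaF A b (x - G⁻¹ *ᵥ (A *ᵥ x - b)) ≤ η * lambdaF A b x := by
  have hG : G.PosDef := by simpa using hA.add_posSemidef hGA
  set r := A *ᵥ x - b
  set w := G⁻¹ *ᵥ r
  have hgrad : A *ᵥ (x - w) - b = (G - A) *ᵥ w := by
    rw [sub_mulVec, hG.mulVec_inv_mulVec, mulVec_sub]
    simp only [r]
    abel
  have hsq : (A *ᵥ (x - w) - b) ⬝ᵥ A⁻¹ *ᵥ (A *ᵥ (x - w) - b) ≤ η ^ 2 * (r ⬝ᵥ A⁻¹ *ᵥ r) := by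
    have hwGw : w ⬝ᵥ G *ᵥ w = r ⬝ᵥ G⁻¹ *ᵥ r := by
      rw [hG.mulVec_inv_mulVec, dotProduct_comm]
    have hwAw : w ⬝ᵥ A *ᵥ w ≤ w ⬝ᵥ G *ᵥ w := by
      have := hGA.dotProduct_mulVec_self_nonneg w
      rwa [sub_mulVec, dotProduct_sub, sub_nonneg] at this
    rw [hgrad]
    calc ((G - A) *ᵥ w) ⬝ᵥ A⁻¹ *ᵥ ((G - A) *ᵥ w) ≤ η * (w ⬝ᵥ (G - A) *ᵥ w) :=
          hGA.dotProduct_inv_mulVec_le hA hη hle w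
      _ ≤ η * (η * (w ⬝ᵥ G *ᵥ w)) := by gcongr; exact (hle w).trans (by gcongr)
      _ ≤ η ^ 2 * (r ⬝ᵥ A⁻¹ *ᵥ r) := by
          rw [hwGw, ← mul_assoc, ← sq]
          gcongr
          exact hA.dotProduct_inv_mulVec_le_of_posSemidef_sub hGA r
  calc lambdaF A b (x - w) ≤ Real.sqrt (η ^ 2 * (r ⬝ᵥ A⁻¹ *ᵥ r)) := Real.sqrt_le_sqrt hsq
    _ = η * lambdaF A b x := by rw [Real.sqrt_mul (sq_nonneg η), Real.sqrt_sq hη, lambdaF]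

theorem greedy_SR1_quadratic_minimization_general
    {d : ℕ} {m : ℝ} (hm : 0 < m)
    {A : Matrix (Fin d) (Fin d) ℝ}
    (hAlow : (A - m • (1 : Matrix (Fin d) (Fin d) ℝ)).PosSemidef)
    (b : Fin d → ℝ)
    {G₀ : Matrix (Fin d) (Fin d) ℝ} (hG₀ : (G₀ - A).PosSemidef)
    (x : ℕ → Fin d → ℝ) (G : ℕ → Matrix (Fin d) (Fin d) ℝ) (i : ℕ → Fin d)
    (hGinit : G 0 = G₀)
    (hxrec : ∀ k, x (k + 1) = x k - (G k)⁻¹ *ᵥ (A *ᵥ x k - b))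
    (hgreedy : ∀ k, ∀ j : Fin d, (G k - A) j j ≤ (G k - A) (i k) (i k))
    (hGrec : ∀ k, G (k + 1) = SR1 (G k) A (Pi.single (i k) 1)) :
    ∀ k ≤ d,
      lambdaF A b (x (k + 1)) ≤ (1 - (k : ℝ) / d) * (tauA A G₀ / m) * lambdaF A b (x k) := by
  intro k hk
  have hM0 : (G 0 - A).PosSemidef := hGinit ▸ hG₀
  have hrec (k : ℕ) : G (k + 1) - A = sr1Residual (G k - A) (i k) := by
    rw [hGrec, SR1_single_sub]
  have hMk := posSemidef_of_sr1Residual_rec (M := fun k => G k - A) hM0 hrec k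
  have htrace : (G k - A).trace ≤ (1 - k / d) * tauA A G₀ := by
    simpa [tauA, hGinit] using
      trace_le_one_sub_div_mul (M := fun k => G k - A) hM0 hgreedy hrec k (by simpa using hk)
  have hη : 0 ≤ (1 - (k : ℝ) / d) * (tauA A G₀ / m) :=
    mul_nonneg (sub_nonneg.mpr (div_le_one_of_le₀ (by exact_mod_cast hk) d.cast_nonneg))
      (div_nonneg hG₀.trace_nonneg hm.le)
  have hmA := mul_dotProduct_self_le_of_posSemidef_sub_smul_one hAlow
  have hA := posDef_of_posSemidef_sub_smul_one hm hAlow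
  have hle (y : Fin d → ℝ) :
      y ⬝ᵥ (G k - A) *ᵥ y ≤ (1 - (k : ℝ) / d) * (tauA A G₀ / m) * (y ⬝ᵥ A *ᵥ y) := by
    refine (hMk.dotProduct_mulVec_le_trace_div_mul hm hmA y).trans ?_
    rw [← mul_div_assoc]
    gcongr
    exact hA.posSemidef.dotProduct_mulVec_self_nonneg y
  rw [hxrec]
  exact lambdaF_sub_inv_mulVec_le hA hMk hη hle b (x k)

/-- Greedy SR1 method for quadratic minimization:
`λ_f(x_{k+1}) ≤ (1 - k/d) (τ_A(G_0)/m) λ_f(x_k)` for `0 ≤ k ≤ d`. -/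
theorem greedy_SR1_quadratic_minimization
    {d : ℕ} {m L : ℝ} (hm : 0 < m) (hmL : m ≤ L)
    {A : Matrix (Fin d) (Fin d) ℝ} (hAsymm : A.IsSymm)
    (hAlow : (A - m • (1 : Matrix (Fin d) (Fin d) ℝ)).PosSemidef)
    (hAup : (L • (1 : Matrix (Fin d) (Fin d) ℝ) - A).PosSemidef)
    (b : Fin d → ℝ)
    {G₀ : Matrix (Fin d) (Fin d) ℝ} (hG₀symm : G₀.IsSymm) (hG₀ : (G₀ - A).PosSemidef)
    (x : ℕ → Fin d → ℝ) (G : ℕ → Matrix (Fin d) (Fin d) ℝ) (i : ℕ → Fin d)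
    (hGinit : G 0 = G₀)
    (hxrec : ∀ k, x (k + 1) = x k - (G k)⁻¹ *ᵥ (A *ᵥ x k - b))
    (hgreedy : ∀ k, ∀ j : Fin d, (G k - A) j j ≤ (G k - A) (i k) (i k))
    (hGrec : ∀ k, G (k + 1) = SR1 (G k) A (Pi.single (i k) 1)) :
    ∀ k ≤ d,
      lambdaF A b (x (k + 1)) ≤ (1 - (k : ℝ) / d) * (tauA A G₀ / m) * lambdaF A b (x k) :=
  greedy_SR1_quadratic_minimization_general hm hAlow b hG₀ x G i hGinit hxrec hgreedy hGrec
end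

section
/- Let 0 < m ≤ L be reals, let A be a real symmetric d×d matrix with m·I_d ⪯ A ⪯ L·I_d, let G be symmetric with G ⪰ A, let τ ∈ [0,1], and let u ∈ ℝ^d with u ≠ 0. Then σ_A(Broyd_τ(G, A, u)) ≤ σ_A(G) − (1/L) · (uᵀ(G−A)u)/(uᵀ u). -/
open Matrix

/-- The Broyden family quasi-Newton update `Broyd_τ(G, A, u)`. -/
noncomputable def Broyd {d : ℕ} (τ : ℝ) (G A : Matrix (Fin d) (Fin d) ℝ) (u : Fin d → ℝ) :
    Matrix (Fin d) (Fin d) ℝ :=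
  if G *ᵥ u = A *ᵥ u then G
  else
    τ • (G - (u ⬝ᵥ (A *ᵥ u))⁻¹ •
            (vecMulVec (A *ᵥ u) (u ᵥ* G) + vecMulVec (G *ᵥ u) (u ᵥ* A))
          + ((u ⬝ᵥ (G *ᵥ u)) / (u ⬝ᵥ (A *ᵥ u)) + 1) •
            ((u ⬝ᵥ (A *ᵥ u))⁻¹ • vecMulVec (A *ᵥ u) (u ᵥ* A)))
      + (1 - τ) • (G - (u ⬝ᵥ ((G - A) *ᵥ u))⁻¹ •
            vecMulVec ((G - A) *ᵥ u) (u ᵥ* (G - A)))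

/-! Since `σ_A` is affine in `G`, `σ_A(Broyd_τ(G, A, u))` is the `τ`-combination of `σ_A` at the
DFP update (the `τ`-bracket) and at the SR1 update (the `(1 - τ)`-bracket), and a rank-one
correction `c • x yᵀ` moves `σ_A` by `c · yᵀA⁻¹x`. With `p = uᵀ(G - A)u`, `s = uᵀAu` and
`v = (G - A)u`, DFP therefore lowers `σ_A` by `p / s` and SR1 by `vᵀA⁻¹v / p`. The bound `A ⪯ L·I`
gives `p / s ≥ p / (L uᵀu)`, and Cauchy–Schwarz for the form of `A`,
`p² = (uᵀA (A⁻¹v))² ≤ s · vᵀA⁻¹v`, gives `vᵀA⁻¹v / p ≥ p / s`. -/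

namespace Matrix

lemma PosDef.of_posSemidef_sub_smul_one {n : Type*} [DecidableEq n] {A : Matrix n n ℝ}
    {m : ℝ} (hm : 0 < m) (h : (A - m • (1 : Matrix n n ℝ)).PosSemidef) : A.PosDef := by
  simpa using (PosDef.one.smul hm).add_posSemidef h

variable {n : Type*} [Fintype n]

lemma trace_vecMulVec_mul {R : Type*} [CommSemiring R] (x y : n → R) (M : Matrix n n R) :
    (vecMulVec x y * M).trace = y ⬝ᵥ M *ᵥ x := by
  rw [vecMulVec_mul, trace_vecMulVec, dotProduct_comm, dotProduct_mulVec]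

lemma IsSymm.vecMul_eq_mulVec {R : Type*} [CommSemiring R] {M : Matrix n n R}
    (hM : M.IsSymm) (x : n → R) : x ᵥ* M = M *ᵥ x := by
  rw [← vecMul_transpose, hM.eq]

lemma PosSemidef.dotProduct_mulVec_pos_iff {M : Matrix n n ℝ} (hM : M.PosSemidef)
    (x : n → ℝ) : 0 < x ⬝ᵥ M *ᵥ x ↔ M *ᵥ x ≠ 0 := by
  have hzero := hM.dotProduct_mulVec_zero_iff x
  rw [star_trivial] at hzero
  rw [lt_iff_le_and_ne, ne_comm, ne_eq, hzero,
    and_iff_right (by simpa using hM.dotProduct_mulVec_nonneg x)]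

lemma PosSemidef.dotProduct_mulVec_le [DecidableEq n] {A : Matrix n n ℝ} {L : ℝ}
    (h : (L • (1 : Matrix n n ℝ) - A).PosSemidef) (x : n → ℝ) :
    x ⬝ᵥ A *ᵥ x ≤ L * (x ⬝ᵥ x) := by
  have hnonneg := h.dotProduct_mulVec_nonneg x
  simp only [star_trivial, sub_mulVec, smul_mulVec, one_mulVec, dotProduct_sub,
    dotProduct_smul, smul_eq_mul] at hnonneg
  linarith

lemma PosDef.dotProduct_sq_le [DecidableEq n] {A : Matrix n n ℝ} (hA : A.PosDef)
    (x y : n → ℝ) : (x ⬝ᵥ y) ^ 2 ≤ (x ⬝ᵥ A *ᵥ x) * (y ⬝ᵥ A⁻¹ *ᵥ y) := by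
  have hsymm : A.IsSymm := isHermitian_iff_isSymm.1 hA.isHermitian
  have hAA : A *ᵥ A⁻¹ *ᵥ y = y := by
    rw [mulVec_mulVec, mul_nonsing_inv _ hA.det_pos.ne'.isUnit, one_mulVec]
  have hcs := (toBilin' A).apply_sq_le_of_symm
    (fun z => by simpa [toBilin'_apply'] using hA.posSemidef.dotProduct_mulVec_nonneg z)
    (LinearMap.BilinForm.isSymm_iff.1 (isSymm_toBilin'_iff_isSymm.2 hsymm)) x (A⁻¹ *ᵥ y)
  simp only [toBilin'_apply'] at hcs
  rwa [hAA, dotProduct_comm (A⁻¹ *ᵥ y)] at hcs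

end Matrix

section Broyden

variable {n : Type*} [Fintype n]

noncomputable def dfpUpdate (G A : Matrix n n ℝ) (u : n → ℝ) : Matrix n n ℝ :=
  G - (u ⬝ᵥ (A *ᵥ u))⁻¹ • (vecMulVec (A *ᵥ u) (u ᵥ* G) + vecMulVec (G *ᵥ u) (u ᵥ* A))
    + ((u ⬝ᵥ (G *ᵥ u)) / (u ⬝ᵥ (A *ᵥ u)) + 1) •
      ((u ⬝ᵥ (A *ᵥ u))⁻¹ • vecMulVec (A *ᵥ u) (u ᵥ* A))

noncomputable def sr1Update (G A : Matrix n n ℝ) (u : n → ℝ) : Matrix n n ℝ :=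
  G - (u ⬝ᵥ ((G - A) *ᵥ u))⁻¹ • vecMulVec ((G - A) *ᵥ u) (u ᵥ* (G - A))

variable {d : ℕ} {A G : Matrix (Fin d) (Fin d) ℝ} {u : Fin d → ℝ}

lemma broyd_of_mulVec_eq (τ : ℝ) (h : G *ᵥ u = A *ᵥ u) : Broyd τ G A u = G := if_pos h

lemma broyd_of_mulVec_ne (τ : ℝ) (h : G *ᵥ u ≠ A *ᵥ u) :
    Broyd τ G A u = τ • dfpUpdate G A u + (1 - τ) • sr1Update G A u := if_neg h

lemma sigmaA_convexComb (A X Y : Matrix (Fin d) (Fin d) ℝ) (τ : ℝ) :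
    sigmaA A (τ • X + (1 - τ) • Y) = τ * sigmaA A X + (1 - τ) * sigmaA A Y := by
  have : τ • X + (1 - τ) • Y - A = τ • (X - A) + (1 - τ) • (Y - A) := by module
  simp only [sigmaA, this, add_mul, smul_mul_assoc, trace_add, trace_smul, smul_eq_mul]

lemma sigmaA_add_smul_vecMulVec (A G : Matrix (Fin d) (Fin d) ℝ) (c : ℝ) (x y : Fin d → ℝ) :
    sigmaA A (G + c • vecMulVec x y) = sigmaA A G + c * (y ⬝ᵥ A⁻¹ *ᵥ x) := by
  simp only [sigmaA, add_sub_right_comm, add_mul, smul_mul_assoc, trace_add, trace_smul,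
    trace_vecMulVec_mul, smul_eq_mul]

lemma sigmaA_sr1Update (A G : Matrix (Fin d) (Fin d) ℝ) (u : Fin d → ℝ) :
    sigmaA A (sr1Update G A u) = sigmaA A G -
      (u ᵥ* (G - A)) ⬝ᵥ A⁻¹ *ᵥ ((G - A) *ᵥ u) / (u ⬝ᵥ (G - A) *ᵥ u) := by
  rw [sr1Update, sub_eq_add_neg, ← neg_smul, sigmaA_add_smul_vecMulVec]
  ring

lemma sigmaA_dfpUpdate (hA : IsUnit A.det) (G : Matrix (Fin d) (Fin d) ℝ) (u : Fin d → ℝ) :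
    sigmaA A (dfpUpdate G A u) = sigmaA A G - (u ⬝ᵥ (G - A) *ᵥ u) / (u ⬝ᵥ A *ᵥ u) := by
  have hAu : A⁻¹ *ᵥ A *ᵥ u = u := by rw [mulVec_mulVec, nonsing_inv_mul _ hA, one_mulVec]
  have hGu : (u ᵥ* A) ⬝ᵥ A⁻¹ *ᵥ G *ᵥ u = u ⬝ᵥ G *ᵥ u := by
    rw [← dotProduct_mulVec, mulVec_mulVec, mulVec_mulVec, mul_nonsing_inv _ hA, Matrix.one_mul]
  have hsplit : dfpUpdate G A u = G + (-(u ⬝ᵥ A *ᵥ u)⁻¹) • vecMulVec (A *ᵥ u) (u ᵥ* G)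
      + (-(u ⬝ᵥ A *ᵥ u)⁻¹) • vecMulVec (G *ᵥ u) (u ᵥ* A)
      + (((u ⬝ᵥ (G *ᵥ u)) / (u ⬝ᵥ (A *ᵥ u)) + 1) * (u ⬝ᵥ (A *ᵥ u))⁻¹) •
        vecMulVec (A *ᵥ u) (u ᵥ* A) := by
    rw [dfpUpdate]; module
  rw [hsplit, sigmaA_add_smul_vecMulVec, sigmaA_add_smul_vecMulVec, sigmaA_add_smul_vecMulVec,
    hAu, hGu, ← dotProduct_mulVec, ← dotProduct_mulVec, sub_mulVec, dotProduct_sub]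
  rcases eq_or_ne (u ⬝ᵥ A *ᵥ u) 0 with hs | hs
  · simp [hs]
  · field_simp
    ring

lemma dfp_decrease_le_sr1_decrease (hA : A.PosDef) (hGA : (G - A).IsSymm)
    (hp : 0 < u ⬝ᵥ (G - A) *ᵥ u) :
    (u ⬝ᵥ (G - A) *ᵥ u) / (u ⬝ᵥ A *ᵥ u) ≤
      (u ᵥ* (G - A)) ⬝ᵥ A⁻¹ *ᵥ ((G - A) *ᵥ u) / (u ⬝ᵥ (G - A) *ᵥ u) := by
  have hu : u ≠ 0 := by rintro rfl; simp at hp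
  have hs : 0 < u ⬝ᵥ A *ᵥ u := by simpa using hA.dotProduct_mulVec_pos hu
  rw [div_le_div_iff₀ hs hp, hGA.vecMul_eq_mulVec, ← sq, mul_comm]
  exact hA.dotProduct_sq_le u _

end Broyden

theorem sigma_broyden_decrease_bound_general
    {d : ℕ} {m L : ℝ} (hm : 0 < m)
    {A : Matrix (Fin d) (Fin d) ℝ}
    (hAlow : (A - m • (1 : Matrix (Fin d) (Fin d) ℝ)).PosSemidef)
    (hAup : (L • (1 : Matrix (Fin d) (Fin d) ℝ) - A).PosSemidef)
    {G : Matrix (Fin d) (Fin d) ℝ} (hGA : (G - A).PosSemidef)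
    {τ : ℝ} (hτ : τ ∈ Set.Icc (0 : ℝ) 1)
    {u : Fin d → ℝ} (hu : u ≠ 0) :
    sigmaA A (Broyd τ G A u) ≤
      sigmaA A G - 1 / L * ((u ⬝ᵥ ((G - A) *ᵥ u)) / (u ⬝ᵥ u)) := by
  have hA : A.PosDef := .of_posSemidef_sub_smul_one hm hAlow
  have hs : 0 < u ⬝ᵥ A *ᵥ u := by simpa using hA.dotProduct_mulVec_pos hu
  by_cases h : G *ᵥ u = A *ᵥ u
  · simp [broyd_of_mulVec_eq τ h, sub_mulVec, h]
  have hp : 0 < u ⬝ᵥ (G - A) *ᵥ u := by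
    rwa [hGA.dotProduct_mulVec_pos_iff, sub_mulVec, sub_ne_zero]
  have hdfp : (u ⬝ᵥ (G - A) *ᵥ u) / (L * (u ⬝ᵥ u)) ≤ (u ⬝ᵥ (G - A) *ᵥ u) / (u ⬝ᵥ A *ᵥ u) :=
    div_le_div_of_nonneg_left hp.le hs (hAup.dotProduct_mulVec_le u)
  have hsr1 := dfp_decrease_le_sr1_decrease hA (isHermitian_iff_isSymm.1 hGA.isHermitian) hp
  rw [broyd_of_mulVec_ne τ h, sigmaA_convexComb, sigmaA_dfpUpdate hA.det_pos.ne'.isUnit,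
    sigmaA_sr1Update, div_mul_div_comm, one_mul]
  linarith [mul_le_mul_of_nonneg_left hdfp hτ.1,
    mul_le_mul_of_nonneg_left (hdfp.trans hsr1) (sub_nonneg.2 hτ.2)]

/-- One-step decrease bound for `σ_A` under the Broyden family update:
`σ_A(Broyd_τ(G,A,u)) ≤ σ_A(G) − (1/L)·(uᵀ(G−A)u)/(uᵀu)`. -/
theorem sigma_broyden_decrease_bound
    {d : ℕ} {m L : ℝ} (hm : 0 < m) (hmL : m ≤ L)
    {A : Matrix (Fin d) (Fin d) ℝ} (hAsymm : A.IsSymm)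
    (hAlow : (A - m • (1 : Matrix (Fin d) (Fin d) ℝ)).PosSemidef)
    (hAup : (L • (1 : Matrix (Fin d) (Fin d) ℝ) - A).PosSemidef)
    {G : Matrix (Fin d) (Fin d) ℝ} (hGsymm : G.IsSymm) (hGA : (G - A).PosSemidef)
    {τ : ℝ} (hτ : τ ∈ Set.Icc (0 : ℝ) 1)
    {u : Fin d → ℝ} (hu : u ≠ 0) :
    sigmaA A (Broyd τ G A u) ≤
      sigmaA A G - 1 / L * ((u ⬝ᵥ ((G - A) *ᵥ u)) / (u ⬝ᵥ u)) :=
  sigma_broyden_decrease_bound_general hm hAlow hAup hGA hτ hu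
end

section
/- Let R be a real symmetric positive semidefinite d×d matrix and u ∈ ℝ^d with Ru ≠ 0, and set R' := R − (R u uᵀ R)/(uᵀ R u). Then: (i) R' is positive semidefinite; (ii) R'u = 0; (iii) R'v = 0 for every v with Rv = 0; and consequently (iv) rank(R') ≤ rank(R) − 1. -/
/-!
Writing `c = uᵀRu`, the update acts by `R' x = R x - (uᵀRx / c) • R u`, so it annihilates `u`
and everything `R` annihilates. Its quadratic form is `xᵀRx - (uᵀRx)² / c`, which is nonnegative by
the Cauchy–Schwarz inequality for the positive semidefinite form `(x, y) ↦ xᵀRy`. Since `Ru ≠ 0`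
forces `c > 0`, the kernel of `R'` strictly contains that of `R`, and rank–nullity gives the drop
in rank.
-/

open Matrix LinearMap Module

theorem LinearMap.finrank_range_lt_of_ker_lt {K V W₁ W₂ : Type*} [DivisionRing K]
    [AddCommGroup V] [Module K V] [FiniteDimensional K V] [AddCommGroup W₁] [Module K W₁]
    [AddCommGroup W₂] [Module K W₂] {f : V →ₗ[K] W₁} {g : V →ₗ[K] W₂} (h : ker f < ker g) :
    finrank K (range g) < finrank K (range f) := by
  have := Submodule.finrank_lt_finrank_of_lt h
  have := f.finrank_range_add_finrank_ker
  have := g.finrank_range_add_finrank_ker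
  omega

namespace Matrix

variable {m n K : Type*}

theorem isSymm_vecMulVec_self [CommSemiring K] (w : n → K) : (vecMulVec w w).IsSymm :=
  transpose_vecMulVec w w

theorem PosSemidef.isSymm_s17 [CommRing K] [PartialOrder K] [StarRing K] [TrivialStar K]
    {R : Matrix n n K} (hR : R.PosSemidef) : R.IsSymm :=
  isHermitian_iff_isSymm.mp hR.isHermitian

theorem PosSemidef.dotProduct_mulVec_self_nonneg_s17 [Fintype n] [CommRing K] [PartialOrder K]
    [StarRing K] [TrivialStar K] {R : Matrix n n K} (hR : R.PosSemidef) (x : n → K) :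
    0 ≤ x ⬝ᵥ R *ᵥ x := by
  simpa using hR.dotProduct_mulVec_nonneg x

variable [Fintype n]

section Symm

variable [CommSemiring K] {R : Matrix n n K}

theorem IsSymm.vecMul_eq_mulVec_s17 (hR : R.IsSymm) (x : n → K) : x ᵥ* R = R *ᵥ x := by
  rw [← vecMul_transpose, hR.eq]

theorem IsSymm.dotProduct_mulVec_comm_s17 (hR : R.IsSymm) (x y : n → K) :
    x ⬝ᵥ R *ᵥ y = y ⬝ᵥ R *ᵥ x := by
  rw [dotProduct_mulVec, hR.vecMul_eq_mulVec_s17, dotProduct_comm]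

end Symm

section Field

variable [Field K]

theorem rank_lt_rank_of_ker_lt {A B : Matrix m n K} (hAB : ∀ v, A *ᵥ v = 0 → B *ᵥ v = 0)
    {u : n → K} (hA : A *ᵥ u ≠ 0) (hB : B *ᵥ u = 0) : B.rank < A.rank :=
  finrank_range_lt_of_ker_lt <| lt_of_le_of_ne hAB fun h => hA ((SetLike.ext_iff.mp h u).mpr hB)

/-- Wedderburn's rank-one reduction of `R` along `u`. When `uᵀ R u = 0` the inverse is `0` and
this is `R` itself. -/
def rankOneReduction (R : Matrix n n K) (u : n → K) : Matrix n n K :=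
  R - (u ⬝ᵥ (R *ᵥ u))⁻¹ • vecMulVec (R *ᵥ u) (u ᵥ* R)

variable {R : Matrix n n K} {u : n → K}

theorem rankOneReduction_mulVec (R : Matrix n n K) (u x : n → K) :
    rankOneReduction R u *ᵥ x = R *ᵥ x - ((u ⬝ᵥ R *ᵥ x) / (u ⬝ᵥ R *ᵥ u)) • R *ᵥ u := by
  rw [rankOneReduction, sub_mulVec, smul_mulVec, vecMulVec_mulVec, op_smul_eq_smul, smul_smul,
    ← dotProduct_mulVec, div_eq_inv_mul]

theorem rankOneReduction_mulVec_self (hu : u ⬝ᵥ R *ᵥ u ≠ 0) : rankOneReduction R u *ᵥ u = 0 := by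
  rw [rankOneReduction_mulVec, div_self hu, one_smul, sub_self]

theorem rankOneReduction_mulVec_of_mulVec_eq_zero {x : n → K} (hx : R *ᵥ x = 0) :
    rankOneReduction R u *ᵥ x = 0 := by
  rw [rankOneReduction_mulVec, hx, dotProduct_zero, zero_div, zero_smul, sub_zero]

theorem dotProduct_rankOneReduction_mulVec (R : Matrix n n K) (u x : n → K) :
    x ⬝ᵥ rankOneReduction R u *ᵥ x =
      x ⬝ᵥ R *ᵥ x - (u ⬝ᵥ R *ᵥ x) * (x ⬝ᵥ R *ᵥ u) / (u ⬝ᵥ R *ᵥ u) := by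
  rw [rankOneReduction_mulVec, dotProduct_sub, dotProduct_smul, smul_eq_mul, div_mul_eq_mul_div]

theorem IsSymm.rankOneReduction (hR : R.IsSymm) (u : n → K) : (rankOneReduction R u).IsSymm := by
  rw [Matrix.rankOneReduction, hR.vecMul_eq_mulVec_s17]
  exact hR.sub ((isSymm_vecMulVec_self _).smul _)

end Field

section OrderedField

variable [Field K] [LinearOrder K] [IsStrictOrderedRing K] [StarRing K] [TrivialStar K]
  {R : Matrix n n K}

theorem PosSemidef.dotProduct_mulVec_mul_le (hR : R.PosSemidef) (x y : n → K) :
    (x ⬝ᵥ R *ᵥ y) * (y ⬝ᵥ R *ᵥ x) ≤ (x ⬝ᵥ R *ᵥ x) * (y ⬝ᵥ R *ᵥ y) := by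
  classical
  have hnonneg (z : n → K) : 0 ≤ toBilin' R z z := by
    simpa [toBilin'_apply'] using hR.dotProduct_mulVec_nonneg z
  simpa only [toBilin'_apply'] using (toBilin' R).apply_mul_apply_le_of_forall_zero_le hnonneg x y

theorem PosSemidef.mulVec_eq_zero_of_dotProduct_mulVec_self_eq_zero (hR : R.PosSemidef)
    {u : n → K} (hu : u ⬝ᵥ R *ᵥ u = 0) : R *ᵥ u = 0 := by
  have h := hR.dotProduct_mulVec_mul_le u (R *ᵥ u)
  rw [hu, zero_mul, hR.isSymm_s17.dotProduct_mulVec_comm_s17 u, ← sq] at h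
  have hsq : (R *ᵥ u ⬝ᵥ R *ᵥ u) ^ 2 = 0 := le_antisymm h (sq_nonneg _)
  exact dotProduct_self_eq_zero.mp (pow_eq_zero_iff two_ne_zero |>.mp hsq)

theorem PosSemidef.rankOneReduction (hR : R.PosSemidef) (u : n → K) :
    (rankOneReduction R u).PosSemidef := by
  refine .of_dotProduct_mulVec_nonneg (isHermitian_iff_isSymm.mpr (hR.isSymm_s17.rankOneReduction u))
    fun x => ?_
  rw [star_trivial, dotProduct_rankOneReduction_mulVec, sub_nonneg]
  exact div_le_of_le_mul₀ (hR.dotProduct_mulVec_self_nonneg_s17 u) (hR.dotProduct_mulVec_self_nonneg_s17 x)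
    ((hR.dotProduct_mulVec_mul_le u x).trans_eq (mul_comm _ _))

end OrderedField

end Matrix

/-- One SR1 residual step `R' = R − (Ruuᵀ R)/(uᵀRu)`:
positivity is preserved, `u` and `ker R` are annihilated, and rank drops by one. -/
theorem SR1_residual_step
    {d : ℕ} {R : Matrix (Fin d) (Fin d) ℝ} (hR : R.PosSemidef)
    {u : Fin d → ℝ} (hu : R *ᵥ u ≠ 0) :
    let R' := R - (u ⬝ᵥ (R *ᵥ u))⁻¹ • vecMulVec (R *ᵥ u) (u ᵥ* R)
    R'.PosSemidef ∧ R' *ᵥ u = 0 ∧ (∀ v : Fin d → ℝ, R *ᵥ v = 0 → R' *ᵥ v = 0) ∧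
      R'.rank ≤ R.rank - 1 := by
  intro R'
  have hc : u ⬝ᵥ R *ᵥ u ≠ 0 := mt hR.mulVec_eq_zero_of_dotProduct_mulVec_self_eq_zero hu
  have hR'u : R' *ᵥ u = 0 := rankOneReduction_mulVec_self hc
  have hker (v : Fin d → ℝ) (hv : R *ᵥ v = 0) : R' *ᵥ v = 0 :=
    rankOneReduction_mulVec_of_mulVec_eq_zero hv
  have hrank : R'.rank < R.rank := rank_lt_rank_of_ker_lt hker hu hR'u
  exact ⟨hR.rankOneReduction u, hR'u, hker, by omega⟩
end
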